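/- Let K be the closed unit disc in ℂ, let Φ : ℂ → ℂ be entire with Taylor expansion Φ(z) = ∑_{k=0}^∞ c_k z^k at 0, and let a, b ∈ K satisfy c₂ a² ≠ c₁ b². Define P : C(K) → ℂ by P(x) = x(a) + x(b)². Then P is orthogonally additive, but there is no complex Borel measure μ on K such that P(x) = ∫_K Φ(x(t)) dμ(t) for all x ∈ C(K). -/

import Mathlib

/-!
Expanding `Φ` under the integral turns `s ↦ ∫ Φ(s·g(t)) w(t) dμ(t)`, for `‖g‖ ≤ 1`, into the
power series `∑ₖ cₖ (∫ gᵏ w dμ) sᵏ`, while the representation says it is the quadratic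
`g(a)·s + g(b)²·s²`. Comparing coefficients for `g = z` and `g = z²`, with `z` the inclusion
of the disc into `ℂ`, gives `c₂ m = b²` and `c₁ m = a²` for the same moment `m = ∫ z² w dμ`,
whence `c₂ a² = c₁ b²`.
-/

open MeasureTheory Filter Topology

/-- The closed unit disc in `ℂ`, as a compact Hausdorff space. -/
abbrev DiscK : Type := ↥(Metric.closedBall (0 : ℂ) 1)

instance : CompactSpace DiscK := isCompact_iff_compactSpace.mp (isCompact_closedBall 0 1)

/-- `P` is orthogonally additive when it is additive on orthogonal pairs. -/
def IsOrthAdd (P : C(DiscK, ℂ) → ℂ) : Prop :=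
  ∀ x y : C(DiscK, ℂ), x * y = 0 → P (x + y) = P x + P y

open Polynomial FormalMultilinearSeries

section PowerSeries

variable {𝕜 : Type*} [RCLike 𝕜] {c d : ℕ → 𝕜}

theorem ofScalars_radius_eq_top_of_summable (hc : ∀ z : 𝕜, Summable fun k => c k * z ^ k) :
    (ofScalars 𝕜 c).radius = ⊤ := by
  refine ENNReal.eq_top_of_forall_nnreal_le fun r =>
    (ofScalars 𝕜 c).le_radius_of_tendsto (l := 0) ?_
  simpa [ofScalars_norm] using (hc ((r : ℝ) : 𝕜)).tendsto_atTop_zero.norm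

theorem summable_norm_mul_pow_of_summable (hc : ∀ z : 𝕜, Summable fun k => c k * z ^ k)
    (r : NNReal) : Summable fun k => ‖c k‖ * (r : ℝ) ^ k := by
  simpa [ofScalars_norm] using (ofScalars 𝕜 c).summable_norm_mul_pow
    (ofScalars_radius_eq_top_of_summable hc ▸ ENNReal.coe_lt_top)

theorem hasFPowerSeriesOnBall_ofScalars {f : 𝕜 → 𝕜}
    (hc : ∀ z : 𝕜, HasSum (fun k => c k * z ^ k) (f z)) :
    HasFPowerSeriesOnBall f (ofScalars 𝕜 c) 0 ⊤ where
  r_le := (ofScalars_radius_eq_top_of_summable fun z => (hc z).summable).ge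
  r_pos := ENNReal.zero_lt_top
  hasSum := fun {y} _ => by simpa [ofScalars_apply_eq, mul_comm] using hc y

theorem eq_of_hasSum_mul_pow {f : 𝕜 → 𝕜} (hc : ∀ z : 𝕜, HasSum (fun k => c k * z ^ k) (f z))
    (hd : ∀ z : 𝕜, HasSum (fun k => d k * z ^ k) (f z)) : c = d :=
  (ofScalars_series_eq_iff 𝕜 c d).mp <|
    (hasFPowerSeriesOnBall_ofScalars hc).hasFPowerSeriesAt.eq_formalMultilinearSeries
      (hasFPowerSeriesOnBall_ofScalars hd).hasFPowerSeriesAt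

end PowerSeries

theorem Polynomial.hasSum_coeff_mul_pow {R : Type*} [CommSemiring R] [TopologicalSpace R]
    (p : R[X]) (x : R) : HasSum (fun k => p.coeff k * x ^ k) (p.eval x) := by
  rw [eval_eq_sum_range]
  exact hasSum_sum_of_ne_finset_zero fun k hk => by
    rw [coeff_eq_zero_of_natDegree_lt (by simpa using hk), zero_mul]

theorem hasSum_integral_comp_mul {𝕜 α : Type*} [RCLike 𝕜] [MeasurableSpace α] {μ : Measure α}
    {Φ : 𝕜 → 𝕜} {c : ℕ → 𝕜} (hc : ∀ z, HasSum (fun k => c k * z ^ k) (Φ z)) {g w : α → 𝕜}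
    (hg : AEStronglyMeasurable g μ) (hg1 : ∀ t, ‖g t‖ ≤ 1) (hw : Integrable w μ) (s : 𝕜) :
    HasSum (fun k => (c k * ∫ t, g t ^ k * w t ∂μ) * s ^ k) (∫ t, Φ (s * g t) * w t ∂μ) := by
  set F : ℕ → α → 𝕜 := fun k t => c k * s ^ k * (g t ^ k * w t)
  have hF_le : ∀ k t, ‖F k t‖ ≤ ‖c k‖ * ‖s‖ ^ k * ‖w t‖ := fun k t => by
    simp only [F, norm_mul, norm_pow]
    gcongr
    exact mul_le_of_le_one_left (norm_nonneg _) (pow_le_one₀ (norm_nonneg _) (hg1 t))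
  have hF_int : ∀ k, Integrable (F k) μ := fun k =>
    (hw.norm.const_mul _).mono' (((hg.pow k).mul hw.1).const_mul _) (ae_of_all _ (hF_le k))
  have hF_sum : Summable fun k => ∫ t, ‖F k t‖ ∂μ := by
    refine ((summable_norm_mul_pow_of_summable (fun z => (hc z).summable) ‖s‖₊).mul_right
      (∫ t, ‖w t‖ ∂μ)).of_nonneg_of_le (fun k => integral_nonneg fun _ => norm_nonneg _)
      fun k => ?_
    rw [coe_nnnorm, ← integral_const_mul]
    exact integral_mono (hF_int k).norm (hw.norm.const_mul _) (hF_le k)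
  have h_terms : (fun k => ∫ t, F k t ∂μ) = fun k => (c k * ∫ t, g t ^ k * w t ∂μ) * s ^ k := by
    funext k
    simp only [F, integral_const_mul]
    ring
  have h_sum : (∫ t, ∑' k, F k t ∂μ) = ∫ t, Φ (s * g t) * w t ∂μ := by
    congr 1
    funext t
    rw [← ((hc (s * g t)).mul_right (w t)).tsum_eq]
    congr 1
    funext k
    simp only [F]
    ring
  simpa only [h_terms, h_sum] using hasSum_integral_of_summable_integral_norm hF_int hF_sum

theorem coeff_mul_integral_pow_eq_coeff {𝕜 α : Type*} [RCLike 𝕜] [MeasurableSpace α]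
    {μ : Measure α} {Φ : 𝕜 → 𝕜} {c : ℕ → 𝕜} (hc : ∀ z, HasSum (fun k => c k * z ^ k) (Φ z))
    {g w : α → 𝕜} (hg : AEStronglyMeasurable g μ) (hg1 : ∀ t, ‖g t‖ ≤ 1) (hw : Integrable w μ)
    {p : 𝕜[X]} (hp : ∀ s, ∫ t, Φ (s * g t) * w t ∂μ = p.eval s) (k : ℕ) :
    c k * ∫ t, g t ^ k * w t ∂μ = p.coeff k :=
  congrFun (eq_of_hasSum_mul_pow (fun s => hp s ▸ hasSum_integral_comp_mul hc hg hg1 hw s)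
    p.hasSum_coeff_mul_pow) k

theorem isOrthAdd_eval_add_eval_sq (a b : DiscK) : IsOrthAdd fun x => x a + x b ^ 2 := by
  intro x y hxy
  have hb : x b * y b = 0 := by simpa using ContinuousMap.congr_fun hxy b
  simp only [ContinuousMap.add_apply]
  linear_combination 2 * hb

theorem no_factorization_for_degree_two_example_general
    (Φ : ℂ → ℂ) (c : ℕ → ℂ)
    (hc : ∀ z : ℂ, HasSum (fun k : ℕ => c k * z ^ k) (Φ z))
    (a b : DiscK) (hab : c 2 * (a : ℂ) ^ 2 ≠ c 1 * (b : ℂ) ^ 2)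
    (P : C(DiscK, ℂ) → ℂ) (hPdef : ∀ x : C(DiscK, ℂ), P x = x a + (x b) ^ 2) :
    IsOrthAdd P ∧
      ¬ ∃ (μ : Measure DiscK) (w : DiscK → ℂ),
          IsFiniteMeasure μ ∧ Measurable w ∧ (∀ t, ‖w t‖ = 1) ∧
          ∀ x : C(DiscK, ℂ), P x = ∫ t, Φ (x t) * w t ∂μ := by
  refine ⟨funext hPdef ▸ isOrthAdd_eval_add_eval_sq a b, ?_⟩
  rintro ⟨μ, w, hμ, hw_meas, hw_norm, hrep⟩
  have hw : Integrable w μ :=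
    .of_bound hw_meas.aestronglyMeasurable 1 (ae_of_all _ fun t => (hw_norm t).le)
  have h_moments (g : C(DiscK, ℂ)) (hg1 : ∀ t, ‖g t‖ ≤ 1) :
      c 1 * ∫ t, g t ^ 1 * w t ∂μ = g a ∧ c 2 * ∫ t, g t ^ 2 * w t ∂μ = g b ^ 2 := by
    have h_coeff := coeff_mul_integral_pow_eq_coeff (p := C (g a) * X + C (g b ^ 2) * X ^ 2)
      hc g.continuous.aestronglyMeasurable hg1 hw fun s => by
        have h_rep := hrep (s • g)
        simp only [hPdef, ContinuousMap.smul_apply, smul_eq_mul] at h_rep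
        simp only [← h_rep, eval_add, eval_mul, eval_C, eval_X, eval_pow]
        ring
    refine ⟨(h_coeff 1).trans ?_, (h_coeff 2).trans ?_⟩ <;>
      simp only [coeff_add, coeff_C_mul, coeff_X, coeff_X_pow] <;> norm_num
  set z : C(DiscK, ℂ) := ⟨(↑), continuous_subtype_val⟩
  have hz : ∀ t, ‖z t‖ ≤ 1 := fun t => mem_closedBall_zero_iff.mp t.2
  have h_two := (h_moments z hz).2
  have hz_sq : ∀ t, ‖(z ^ 2) t‖ ≤ 1 := fun t => by
    simpa using pow_le_one₀ (n := 2) (norm_nonneg _) (hz t)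
  have h_one := (h_moments (z ^ 2) hz_sq).1
  simp only [z, ContinuousMap.pow_apply, ContinuousMap.coe_mk, pow_one] at h_one h_two
  exact hab (by linear_combination c 1 * h_two - c 2 * h_one)

/-- Let `Φ` be entire with Taylor expansion `Φ z = ∑ₖ cₖ zᵏ` at `0`, and let
`a, b` be points of the closed unit disc `K` with `c₂ a² ≠ c₁ b²`.  Then
`P x = x(a) + x(b)²` is orthogonally additive, but there is no complex Borel
measure `μ` on `K` (encoded in polar form `w · μ` with `μ` finite positive and
`w` unimodular) such that `P x = ∫_K Φ(x(t)) dμ(t)` for all `x ∈ C(K)`. -/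
theorem no_factorization_for_degree_two_example
    (Φ : ℂ → ℂ) (hΦ : Differentiable ℂ Φ) (c : ℕ → ℂ)
    (hc : ∀ z : ℂ, HasSum (fun k : ℕ => c k * z ^ k) (Φ z))
    (a b : DiscK) (hab : c 2 * (a : ℂ) ^ 2 ≠ c 1 * (b : ℂ) ^ 2)
    (P : C(DiscK, ℂ) → ℂ) (hPdef : ∀ x : C(DiscK, ℂ), P x = x a + (x b) ^ 2) :
    IsOrthAdd P ∧
      ¬ ∃ (μ : Measure DiscK) (w : DiscK → ℂ),
          IsFiniteMeasure μ ∧ Measurable w ∧ (∀ t, ‖w t‖ = 1) ∧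
          ∀ x : C(DiscK, ℂ), P x = ∫ t, Φ (x t) * w t ∂μ :=
  no_factorization_for_degree_two_example_general Φ c hc a b hab P hPdef
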